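/- Let (Ω, μ) be a finite measure space and p ∈ (0,1). Let (ε_k) be a sequence of positive reals with ε_k → 0 and let (w_k) be a sequence in L²(Ω, μ) with w_k → w in L²(Ω, μ). Then ∫_Ω 2 ψ_{ε_k}'(w_k(x)²) · w_k(x)² dμ(x) → p ∫_Ω |w(x)|^p dμ(x). -/

import Mathlib

/-!
Writing `2 ψ_ε'(a²) a² = p · min (ε^{p-2} a², |a|^p)`, the integrand differs from `p |a|^p` by at
most `p ε^p` pointwise, so the integrals differ by at most `p ε^p μ(Ω)`. It remains to see that
`u ↦ ∫ |u|^p` is continuous on `L²`: for `p ≤ 1` the map `a ↦ |a|^p` is `p`-Hölder, and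
`|c|^p ≤ η^p + η^{p-2} c²` with `η = ‖u‖₂` gives `∫ |u|^p ≤ (μ(Ω) + 1) ‖u‖₂^p`.
-/

open MeasureTheory Filter

/-- The derivative `ψ_ε'` of the smoothed `p/2`-power function (for `ε > 0`). -/
noncomputable def psiD (p ε t : ℝ) : ℝ :=
  if t = 0 then (p / 2) * ε ^ (p - 2)
  else (p / 2) * min (ε ^ (p - 2)) (t ^ ((p - 2) / 2))

open Topology

section Pointwise

variable {p : ℝ}

theorem abs_rpow_eq_abs_rpow_sub_two_mul_sq {a : ℝ} (ha : a ≠ 0) :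
    |a| ^ p = |a| ^ (p - 2) * a ^ 2 := by
  rw [← sq_abs a, ← Real.rpow_add_natCast (abs_ne_zero.2 ha)]
  norm_num

theorem abs_abs_rpow_sub_abs_rpow_le (hp0 : 0 ≤ p) (hp1 : p ≤ 1) (a b : ℝ) :
    |(|a| ^ p - |b| ^ p)| ≤ |a - b| ^ p := by
  have key (u v : ℝ) : |u| ^ p - |v| ^ p ≤ |u - v| ^ p := by
    have : |u| ^ p ≤ |u - v| ^ p + |v| ^ p :=
      calc |u| ^ p ≤ (|u - v| + |v|) ^ p :=
            Real.rpow_le_rpow (abs_nonneg u) (by linarith [abs_sub_abs_le_abs_sub u v]) hp0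
        _ ≤ |u - v| ^ p + |v| ^ p :=
            Real.rpow_add_le_add_rpow (abs_nonneg _) (abs_nonneg _) hp0 hp1
    linarith
  exact abs_sub_le_iff.2 ⟨key a b, abs_sub_comm a b ▸ key b a⟩

theorem abs_rpow_le_rpow_add_rpow_sub_two_mul_sq (hp0 : 0 ≤ p) (hp2 : p ≤ 2) {η : ℝ}
    (hη : 0 < η) (c : ℝ) : |c| ^ p ≤ η ^ p + η ^ (p - 2) * c ^ 2 := by
  rcases le_or_gt |c| η with hc | hc
  · have : 0 ≤ η ^ (p - 2) * c ^ 2 := by positivity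
    linarith [Real.rpow_le_rpow (abs_nonneg c) hc hp0]
  · have hc0 : c ≠ 0 := abs_pos.1 (hη.trans hc)
    have : |c| ^ (p - 2) ≤ η ^ (p - 2) := Real.rpow_le_rpow_of_nonpos hη hc.le (by linarith)
    rw [abs_rpow_eq_abs_rpow_sub_two_mul_sq hc0]
    nlinarith [Real.rpow_nonneg hη.le p, sq_nonneg c]

theorem two_mul_psiD_sq_mul_sq (p ε a : ℝ) :
    2 * psiD p ε (a ^ 2) * a ^ 2 = p * min (ε ^ (p - 2) * a ^ 2) (|a| ^ p) := by
  rcases eq_or_ne a 0 with rfl | ha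
  · simp [psiD, Real.rpow_nonneg le_rfl p]
  have hpow : (a ^ 2) ^ ((p - 2) / 2) * a ^ 2 = |a| ^ p := by
    rw [← sq_abs a, ← Real.rpow_natCast |a| 2, ← Real.rpow_mul (abs_nonneg a),
      ← Real.rpow_add (abs_pos.2 ha)]
    congr 1
    push_cast
    ring
  rw [psiD, if_neg (pow_ne_zero 2 ha), ← hpow, ← min_mul_of_nonneg _ _ (sq_nonneg a)]
  ring

theorem continuous_two_mul_psiD_sq_mul_sq (hp0 : 0 ≤ p) (ε : ℝ) :
    Continuous fun a => 2 * psiD p ε (a ^ 2) * a ^ 2 := by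
  simp_rw [two_mul_psiD_sq_mul_sq]
  exact continuous_const.mul ((continuous_const.mul (continuous_pow 2)).min
    (continuous_abs.rpow_const fun _ => Or.inr hp0))

theorem abs_two_mul_psiD_sq_mul_sq_sub_le (hp0 : 0 ≤ p) (hp2 : p ≤ 2) {ε : ℝ} (hε : 0 < ε)
    (a : ℝ) : |2 * psiD p ε (a ^ 2) * a ^ 2 - p * |a| ^ p| ≤ p * ε ^ p := by
  rw [two_mul_psiD_sq_mul_sq, ← mul_sub, abs_mul, abs_of_nonneg hp0]
  gcongr
  rcases le_or_gt ε |a| with ha | ha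
  · have ha0 : a ≠ 0 := abs_pos.1 (hε.trans_le ha)
    have : |a| ^ (p - 2) ≤ ε ^ (p - 2) := Real.rpow_le_rpow_of_nonpos hε ha (by linarith)
    rw [min_eq_right (by rw [abs_rpow_eq_abs_rpow_sub_two_mul_sq ha0]; gcongr), sub_self,
      abs_zero]
    positivity
  · have hmin : 0 ≤ min (ε ^ (p - 2) * a ^ 2) (|a| ^ p) := by positivity
    have hmin_le : min (ε ^ (p - 2) * a ^ 2) (|a| ^ p) ≤ |a| ^ p := min_le_right _ _
    have hapow : |a| ^ p ≤ ε ^ p := Real.rpow_le_rpow (abs_nonneg a) ha.le hp0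
    have hεp : 0 ≤ ε ^ p := Real.rpow_nonneg hε.le p
    exact abs_sub_le_iff.2 ⟨by linarith, by linarith⟩

end Pointwise

section Integral

variable {Ω : Type*} [MeasurableSpace Ω] {μ : Measure Ω} {p : ℝ}

theorem MeasureTheory.L2.integral_sq_eq_norm_sq (u : Lp ℝ 2 μ) :
    ∫ x, u x ^ 2 ∂μ = ‖u‖ ^ 2 := by
  rw [← real_inner_self_eq_norm_sq, L2.inner_def]
  simp [sq]

variable [IsFiniteMeasure μ]

theorem MeasureTheory.MemLp.integrable_abs_rpow {f : Ω → ℝ} (hf : MemLp f 2 μ) (hp0 : 0 ≤ p)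
    (hp2 : p ≤ 2) : Integrable (fun x => |f x| ^ p) μ := by
  have hle : ENNReal.ofReal p ≤ 2 := by
    simpa using ENNReal.ofReal_le_ofReal hp2
  simpa [ENNReal.toReal_ofReal hp0] using (hf.mono_exponent hle).integrable_norm_rpow'

theorem integral_abs_rpow_le (u : Lp ℝ 2 μ) (hp0 : 0 < p) (hp2 : p ≤ 2) :
    ∫ x, |u x| ^ p ∂μ ≤ (μ.real Set.univ + 1) * ‖u‖ ^ p := by
  rcases (norm_nonneg u).eq_or_lt with hu | hu
  · obtain rfl : u = 0 := norm_eq_zero.1 hu.symm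
    rw [integral_congr_ae ((Lp.coeFn_zero ℝ 2 μ).mono fun x hx => by rw [hx])]
    simp [Real.zero_rpow hp0.ne']
  set η := ‖u‖
  calc ∫ x, |u x| ^ p ∂μ ≤ ∫ x, (η ^ p + η ^ (p - 2) * u x ^ 2) ∂μ :=
        integral_mono ((Lp.memLp u).integrable_abs_rpow hp0.le hp2)
          ((integrable_const _).add ((Lp.memLp u).integrable_sq.const_mul _))
          fun x => abs_rpow_le_rpow_add_rpow_sub_two_mul_sq hp0.le hp2 hu (u x)
    _ = μ.real Set.univ * η ^ p + η ^ (p - 2) * η ^ 2 := by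
        rw [integral_add (integrable_const _) ((Lp.memLp u).integrable_sq.const_mul _),
          integral_const, integral_const_mul, L2.integral_sq_eq_norm_sq, smul_eq_mul]
    _ = (μ.real Set.univ + 1) * η ^ p := by
        rw [← Real.rpow_add_natCast hu.ne']
        norm_num
        ring

theorem abs_integral_abs_rpow_sub_le (u v : Lp ℝ 2 μ) (hp0 : 0 < p) (hp1 : p ≤ 1) :
    |∫ x, |u x| ^ p ∂μ - ∫ x, |v x| ^ p ∂μ| ≤ (μ.real Set.univ + 1) * ‖u - v‖ ^ p := by
  have hp2 : p ≤ 2 := by linarith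
  have hu := (Lp.memLp u).integrable_abs_rpow hp0.le hp2
  have hv := (Lp.memLp v).integrable_abs_rpow hp0.le hp2
  rw [← integral_sub hu hv]
  calc |∫ x, (|u x| ^ p - |v x| ^ p) ∂μ| ≤ ∫ x, |(|u x| ^ p - |v x| ^ p)| ∂μ :=
        abs_integral_le_integral_abs
    _ ≤ ∫ x, |(u - v) x| ^ p ∂μ := by
        refine integral_mono_ae (hu.sub hv).abs
          ((Lp.memLp (u - v)).integrable_abs_rpow hp0.le hp2) ?_
        filter_upwards [Lp.coeFn_sub u v] with x hx
        rw [hx, Pi.sub_apply]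
        exact abs_abs_rpow_sub_abs_rpow_le hp0.le hp1 _ _
    _ ≤ (μ.real Set.univ + 1) * ‖u - v‖ ^ p := integral_abs_rpow_le (u - v) hp0 hp2

theorem tendsto_integral_abs_rpow {ι : Type*} {l : Filter ι} {u : ι → Lp ℝ 2 μ}
    {v : Lp ℝ 2 μ} (huv : Tendsto u l (𝓝 v)) (hp0 : 0 < p) (hp1 : p ≤ 1) :
    Tendsto (fun i => ∫ x, |u i x| ^ p ∂μ) l (𝓝 (∫ x, |v x| ^ p ∂μ)) := by
  rw [tendsto_iff_norm_sub_tendsto_zero] at huv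
  refine tendsto_iff_norm_sub_tendsto_zero.2 <| squeeze_zero (fun _ => norm_nonneg _)
    (fun i => abs_integral_abs_rpow_sub_le (u i) v hp0 hp1) ?_
  simpa using (huv.rpow_const_nhds_zero hp0).const_mul (μ.real Set.univ + 1)

theorem abs_integral_two_mul_psiD_sub_le {f : Ω → ℝ} (hf : MemLp f 2 μ) (hp0 : 0 ≤ p)
    (hp2 : p ≤ 2) {ε : ℝ} (hε : 0 < ε) :
    |∫ x, 2 * psiD p ε (f x ^ 2) * f x ^ 2 ∂μ - p * ∫ x, |f x| ^ p ∂μ|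
      ≤ p * ε ^ p * μ.real Set.univ := by
  have hpow := (hf.integrable_abs_rpow hp0 hp2).const_mul p
  have hbound := abs_two_mul_psiD_sq_mul_sq_sub_le hp0 hp2 hε
  have hpsi : Integrable (fun x => 2 * psiD p ε (f x ^ 2) * f x ^ 2) μ := by
    refine (hpow.add (integrable_const (p * ε ^ p))).mono'
      ((continuous_two_mul_psiD_sq_mul_sq hp0 ε).comp_aestronglyMeasurable hf.1)
      (ae_of_all _ fun x => ?_)
    have := abs_le.1 (hbound (f x))
    have : 0 ≤ p * |f x| ^ p := by positivity
    rw [Real.norm_eq_abs, abs_le, Pi.add_apply]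
    constructor <;> linarith
  rw [← integral_const_mul, ← integral_sub hpsi hpow, ← Real.norm_eq_abs]
  exact norm_integral_le_of_norm_le_const (ae_of_all _ fun x => hbound (f x))

end Integral

/-- On a finite measure space, for `p ∈ (0,1)`: if `ε_k > 0` with `ε_k → 0` and `w_k → w`
in `L²(Ω,μ)`, then `∫ 2 ψ_{ε_k}'(w_k²) w_k² dμ → p ∫ |w|^p dμ`. -/
theorem integral_psiD_sq_tendsto {Ω : Type*} [MeasurableSpace Ω] (μ : Measure Ω)
    [IsFiniteMeasure μ] (p : ℝ) (hp : p ∈ Set.Ioo (0 : ℝ) 1)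
    (wk : ℕ → Lp ℝ 2 μ) (w : Lp ℝ 2 μ) (hconv : Tendsto wk atTop (nhds w))
    (ε : ℕ → ℝ) (hε : ∀ k, 0 < ε k) (hεconv : Tendsto ε atTop (nhds 0)) :
    Tendsto (fun k => ∫ x, 2 * psiD p (ε k) ((wk k x) ^ 2) * (wk k x) ^ 2 ∂μ) atTop
      (nhds (p * ∫ x, |w x| ^ p ∂μ)) := by
  obtain ⟨hp0, hp1⟩ := hp
  have hpow := (tendsto_integral_abs_rpow hconv hp0 hp1.le).const_mul p
  have herr : Tendsto (fun k => ∫ x, 2 * psiD p (ε k) ((wk k x) ^ 2) * (wk k x) ^ 2 ∂μ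
      - p * ∫ x, |wk k x| ^ p ∂μ) atTop (𝓝 0) := by
    refine squeeze_zero_norm (fun k => abs_integral_two_mul_psiD_sub_le (Lp.memLp (wk k))
      hp0.le (by linarith) (hε k)) ?_
    simpa using ((hεconv.rpow_const_nhds_zero hp0).const_mul p).mul_const (μ.real Set.univ)
  simpa using herr.add hpow
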